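/- Let μ ≠ 0 be real, C = I_{p,q,r} the diagonal matrix with p ones, q minus-ones, and r zeros, σ a diagonal matrix with σ² = I, and H a real vector with HᵀCH = 0 and HᵀCσH ≠ 0. Define G(λ) = (λ² - μ²)⁻¹ ( λ² I + (2λμ/(HᵀCσH))[σ, HHᵀ]C + (2μ²/(HᵀCσH))(σHHᵀ + HHᵀσ)C - μ² I ). Then G satisfies the symmetry (G(λ̄))* C G(λ) = C for all λ ≠ ±μ (with λ complex, G extended by the same formula). -/

import Mathlib

/-! Write `K = HHᵀ`, `u = Kσ`, `v = σK` and `h = HᵀCσH`. Then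
`G(λ) = 1 + (λ² - μ²)⁻¹ (a(v - u) + b(v + u)) C` with `a = 2λμ/h`, `b = 2μ²/h`, and, since
`u* = v`, `G(λ̄)* = 1 + (λ² - μ²)⁻¹ C (a(u - v) + b(u + v))`. From `HᵀCH = 0` and `σCσ = C` the
rank-one pieces satisfy `uCv = vCu = 0`, `uCu = hu`, `vCv = hv`, so the product `G(λ̄)* C G(λ)`
collapses to `C + (λ² - μ²)⁻² (2b(λ² - μ²) + (b² - a²)h) C(u + v)C`, and that scalar vanishes. -/

open Matrix

namespace Matrix

variable {n α : Type*} [Fintype n]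

theorem vecMulVec_mul_mul_vecMulVec [CommSemiring α] (x y z w : n → α) (M : Matrix n n α) :
    vecMulVec x y * M * vecMulVec z w = (y ⬝ᵥ M *ᵥ z) • vecMulVec x w := by
  rw [vecMulVec_mul, vecMulVec_mul_vecMulVec, ← dotProduct_mulVec, vecMulVec_smul]

theorem isSelfAdjoint_dotProduct_mulVec [CommSemiring α] [StarRing α] {M : Matrix n n α}
    (hM : IsSelfAdjoint M) {x : n → α} (hx : star x = x) : IsSelfAdjoint (x ⬝ᵥ M *ᵥ x) := by
  rw [IsSelfAdjoint, ← star_dotProduct_star, star_mulVec, ← star_eq_conjTranspose, hM.star_eq,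
    hx, ← dotProduct_mulVec]

end Matrix

section Darboux

variable {𝕜 R : Type*} [Field 𝕜] [Ring R] [Algebra 𝕜 R]

def darboux (c u v : R) (h m lam : 𝕜) : R :=
  (lam ^ 2 - m ^ 2)⁻¹ • (lam ^ 2 • (1 : R) + (2 * lam * m / h) • ((v - u) * c)
    + (2 * m ^ 2 / h) • ((v + u) * c) - m ^ 2 • (1 : R))

theorem darboux_eq_one_add {c u v : R} {h m lam : 𝕜} (hs : lam ^ 2 - m ^ 2 ≠ 0) :
    darboux c u v h m lam = 1 + (lam ^ 2 - m ^ 2)⁻¹ •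
      (((2 * lam * m / h) • (v - u) + (2 * m ^ 2 / h) • (v + u)) * c) := by
  have hone : (1 : R) = (lam ^ 2 - m ^ 2)⁻¹ • (lam ^ 2 - m ^ 2) • (1 : R) := by
    rw [smul_smul, inv_mul_cancel₀ hs, one_smul]
  conv_rhs => rw [hone, ← smul_add]
  rw [darboux]
  congr 1
  simp only [add_mul, smul_mul_assoc]
  module

theorem darboux_scalar_identity (h m lam : 𝕜) :
    2 * (2 * m ^ 2 / h) * (lam ^ 2 - m ^ 2)
      + ((2 * m ^ 2 / h) ^ 2 - (2 * lam * m / h) ^ 2) * h = 0 := by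
  rcases eq_or_ne h 0 with rfl | hh
  · simp
  · field_simp
    ring

theorem mul_mul_eq_of_orthogonal {c u v : R} {h : 𝕜} (a b : 𝕜)
    (huCv : u * c * v = 0) (hvCu : v * c * u = 0) (huCu : u * c * u = h • u)
    (hvCv : v * c * v = h • v) :
    (a • (u - v) + b • (u + v)) * c * (a • (v - u) + b • (v + u))
      = ((b ^ 2 - a ^ 2) * h) • (u + v) := by
  simp only [add_mul, mul_add, sub_mul, mul_sub, smul_mul_assoc, mul_smul_comm, huCv, hvCu,
    huCu, hvCv]
  module

theorem one_add_smul_mul_mul_one_add_smul (c x y : R) (t : 𝕜) :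
    (1 + t • (c * x)) * c * (1 + t • (y * c))
      = c + t • (c * (x + y) * c) + (t * t) • (c * (x * c * y) * c) := by
  simp only [add_mul, mul_add, smul_mul_assoc, mul_smul_comm, one_mul, mul_one, mul_assoc]
  module

variable [StarRing 𝕜] [StarRing R] [StarModule 𝕜 R]

theorem star_darboux_star {c u v : R} {h m lam : 𝕜} (hc : IsSelfAdjoint c) (huv : star u = v)
    (hh : IsSelfAdjoint h) (hm : IsSelfAdjoint m) (hs : lam ^ 2 - m ^ 2 ≠ 0) :
    star (darboux c u v h m (star lam)) = 1 + (lam ^ 2 - m ^ 2)⁻¹ •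
      (c * ((2 * lam * m / h) • (u - v) + (2 * m ^ 2 / h) • (u + v))) := by
  have hs' : star lam ^ 2 - m ^ 2 ≠ 0 := by
    rwa [← hm.star_eq, ← star_pow, ← star_pow, ← star_sub, star_ne_zero]
  rw [darboux_eq_one_add hs', star_add, star_one, star_smul, star_mul, star_add, star_smul,
    star_smul, star_sub, star_add, huv, ← huv, star_star, hc.star_eq]
  simp only [star_inv₀, star_sub, star_pow, star_div₀, star_mul', star_star, hh.star_eq,
    hm.star_eq, star_ofNat]

theorem star_darboux_star_mul_mul_darboux {c u v : R} {h m lam : 𝕜} (hc : IsSelfAdjoint c)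
    (huv : star u = v) (hh : IsSelfAdjoint h) (hm : IsSelfAdjoint m) (hs : lam ^ 2 - m ^ 2 ≠ 0)
    (huCv : u * c * v = 0) (hvCu : v * c * u = 0) (huCu : u * c * u = h • u)
    (hvCv : v * c * v = h • v) :
    star (darboux c u v h m (star lam)) * c * darboux c u v h m lam = c := by
  rw [star_darboux_star hc huv hh hm hs, darboux_eq_one_add hs,
    one_add_smul_mul_mul_one_add_smul]
  set a := 2 * lam * m / h
  set b := 2 * m ^ 2 / h
  set s := lam ^ 2 - m ^ 2
  have hsum : a • (u - v) + b • (u + v) + (a • (v - u) + b • (v + u)) = (2 * b) • (u + v) := by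
    module
  have hcoeff : s⁻¹ * (2 * b) + s⁻¹ * s⁻¹ * ((b ^ 2 - a ^ 2) * h) = 0 := by
    linear_combination (-(2 * b * s⁻¹)) * inv_mul_cancel₀ hs
      + s⁻¹ * s⁻¹ * darboux_scalar_identity h m lam
  rw [hsum, mul_mul_eq_of_orthogonal a b huCv hvCu huCu hvCv]
  simp only [mul_smul_comm, smul_mul_assoc, smul_smul, add_assoc, ← add_smul]
  rw [hcoeff, zero_smul, add_zero]

end Darboux

theorem star_darboux_star_mul_mul_darboux_vecMulVec {n 𝕜 : Type*} [Fintype n] [DecidableEq n]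
    [Field 𝕜] [StarRing 𝕜] {C σ : Matrix n n 𝕜} {x : n → 𝕜} {m lam : 𝕜}
    (hC : IsSelfAdjoint C) (hσ : IsSelfAdjoint σ) (hCσ : Commute C σ) (hσ2 : σ * σ = 1)
    (hx : star x = x) (hxCx : x ⬝ᵥ C *ᵥ x = 0) (hm : IsSelfAdjoint m)
    (hs : lam ^ 2 - m ^ 2 ≠ 0) :
    star (darboux C (vecMulVec x x * σ) (σ * vecMulVec x x) (x ⬝ᵥ (C * σ) *ᵥ x) m (star lam))
      * C * darboux C (vecMulVec x x * σ) (σ * vecMulVec x x) (x ⬝ᵥ (C * σ) *ᵥ x) m lam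
      = C := by
  set K := vecMulVec x x
  have hK : star K = K := by rw [star_eq_conjTranspose, conjTranspose_vecMulVec, hx]
  have hσCσ : σ * C * σ = C := by rw [← hCσ.eq, mul_assoc, hσ2, mul_one]
  refine star_darboux_star_mul_mul_darboux hC ?_
    (isSelfAdjoint_dotProduct_mulVec ((hC.commute_iff hσ).1 hCσ) hx) hm hs ?_ ?_ ?_ ?_
  · rw [star_mul, hK, hσ.star_eq]
  · rw [show K * σ * C * (σ * K) = K * (σ * C * σ) * K by noncomm_ring, hσCσ,
      vecMulVec_mul_mul_vecMulVec, hxCx, zero_smul]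
  · rw [show σ * K * C * (K * σ) = σ * (K * C * K) * σ by noncomm_ring,
      vecMulVec_mul_mul_vecMulVec, hxCx, zero_smul, mul_zero, zero_mul]
  · rw [show K * σ * C * (K * σ) = K * (C * σ) * K * σ by rw [hCσ.eq]; noncomm_ring,
      vecMulVec_mul_mul_vecMulVec, smul_mul_assoc]
  · rw [show σ * K * C * (σ * K) = σ * (K * (C * σ) * K) by noncomm_ring,
      vecMulVec_mul_mul_vecMulVec, mul_smul_comm]

theorem stmt4_general (p q r : ℕ) (μ : ℝ)
    (C : Matrix (Fin (p + q + r)) (Fin (p + q + r)) ℂ)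
    (hC : C = Matrix.diagonal (fun i : Fin (p + q + r) =>
      if (i : ℕ) < p then 1 else if (i : ℕ) < p + q then -1 else 0))
    (σ : Matrix (Fin (p + q + r)) (Fin (p + q + r)) ℂ)
    (d : Fin (p + q + r) → ℝ)
    (hσ : σ = Matrix.diagonal (fun i => (d i : ℂ)))
    (hσ2 : σ * σ = 1)
    (H : Fin (p + q + r) → ℂ) (hHreal : ∀ i, (H i).im = 0)
    (hH1 : dotProduct H (C.mulVec H) = 0)
    (G : ℂ → Matrix (Fin (p + q + r)) (Fin (p + q + r)) ℂ)
    (hG : ∀ lam : ℂ, G lam = (lam ^ 2 - (μ : ℂ) ^ 2)⁻¹ •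
      (lam ^ 2 • (1 : Matrix (Fin (p + q + r)) (Fin (p + q + r)) ℂ)
        + (2 * lam * (μ : ℂ) / dotProduct H ((C * σ).mulVec H)) •
            ((σ * Matrix.vecMulVec H H - Matrix.vecMulVec H H * σ) * C)
        + (2 * (μ : ℂ) ^ 2 / dotProduct H ((C * σ).mulVec H)) •
            ((σ * Matrix.vecMulVec H H + Matrix.vecMulVec H H * σ) * C)
        - (μ : ℂ) ^ 2 • (1 : Matrix (Fin (p + q + r)) (Fin (p + q + r)) ℂ))) :
    ∀ lam : ℂ, lam ≠ (μ : ℂ) → lam ≠ -(μ : ℂ) →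
      (G (starRingEnd ℂ lam)).conjTranspose * C * G lam = C := by
  intro lam hlam hlam'
  have hCsa : IsSelfAdjoint C := by
    refine hC ▸ (isHermitian_diagonal_of_self_adjoint _ ?_).isSelfAdjoint
    funext i
    rw [Pi.star_apply]
    split_ifs <;> simp
  have hσsa : IsSelfAdjoint σ :=
    hσ ▸ (isHermitian_diagonal_of_self_adjoint _
      (funext fun i => Complex.conj_ofReal (d i))).isSelfAdjoint
  have hCσ : Commute C σ := hC ▸ hσ ▸ commute_diagonal _ _
  have hHstar : star H = H := funext fun i => Complex.conj_eq_iff_im.2 (hHreal i)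
  have hs : lam ^ 2 - (μ : ℂ) ^ 2 ≠ 0 :=
    sub_ne_zero.2 fun h => (sq_eq_sq_iff_eq_or_eq_neg.1 h).elim hlam hlam'
  rw [hG, hG, ← star_eq_conjTranspose]
  exact star_darboux_star_mul_mul_darboux_vecMulVec hCsa hσsa hCσ hσ2 hHstar hH1
    (Complex.conj_ofReal μ) hs

/-- The Darboux matrix `G(λ)` built from a real vector `H` with `HᵀCH = 0`,
`HᵀCσH ≠ 0`, satisfies `(G(λ̄))ᴴ C G(λ) = C` for all `λ ≠ ±μ`. -/
theorem stmt4 (p q r : ℕ) (μ : ℝ) (hμ : μ ≠ 0)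
    (C : Matrix (Fin (p + q + r)) (Fin (p + q + r)) ℂ)
    (hC : C = Matrix.diagonal (fun i : Fin (p + q + r) =>
      if (i : ℕ) < p then 1 else if (i : ℕ) < p + q then -1 else 0))
    (σ : Matrix (Fin (p + q + r)) (Fin (p + q + r)) ℂ)
    (d : Fin (p + q + r) → ℝ)
    (hσ : σ = Matrix.diagonal (fun i => (d i : ℂ)))
    (hσ2 : σ * σ = 1)
    (H : Fin (p + q + r) → ℂ) (hHreal : ∀ i, (H i).im = 0)
    (hH1 : dotProduct H (C.mulVec H) = 0)
    (hH2 : dotProduct H ((C * σ).mulVec H) ≠ 0)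
    (G : ℂ → Matrix (Fin (p + q + r)) (Fin (p + q + r)) ℂ)
    (hG : ∀ lam : ℂ, G lam = (lam ^ 2 - (μ : ℂ) ^ 2)⁻¹ •
      (lam ^ 2 • (1 : Matrix (Fin (p + q + r)) (Fin (p + q + r)) ℂ)
        + (2 * lam * (μ : ℂ) / dotProduct H ((C * σ).mulVec H)) •
            ((σ * Matrix.vecMulVec H H - Matrix.vecMulVec H H * σ) * C)
        + (2 * (μ : ℂ) ^ 2 / dotProduct H ((C * σ).mulVec H)) •
            ((σ * Matrix.vecMulVec H H + Matrix.vecMulVec H H * σ) * C)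
        - (μ : ℂ) ^ 2 • (1 : Matrix (Fin (p + q + r)) (Fin (p + q + r)) ℂ))) :
    ∀ lam : ℂ, lam ≠ (μ : ℂ) → lam ≠ -(μ : ℂ) →
      (G (starRingEnd ℂ lam)).conjTranspose * C * G lam = C :=
  stmt4_general p q r μ C hC σ d hσ hσ2 H hHreal hH1 G hG
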